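/- For every natural number n, the Tribonacci-Lucas number K_{3n} satisfies K_{3n} = ∑_{i=0}^{n} ∑_{j=0}^{i} C(n,i) · C(i,j) · K_{i+j}, where C(a,b) denotes the binomial coefficient. -/
import Mathlib


/-- Tribonacci-Lucas numbers. -/
def tribLucas : ℕ → ℤ
  | 0 => 3
  | 1 => 1
  | 2 => 3
  | n + 3 => tribLucas (n + 2) + tribLucas (n + 1) + tribLucas n

lemma tribLucas_rec (k : ℕ) :
    tribLucas (k + 3) = tribLucas (k + 2) + tribLucas (k + 1) + tribLucas k := rfl

/-- Generic Pascal sum lemma. -/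
lemma pascal_sum (h : ℕ → ℤ) (n : ℕ) :
    ∑ i ∈ Finset.range (n + 2), ((n + 1).choose i : ℤ) * h i =
      ∑ i ∈ Finset.range (n + 1), (n.choose i : ℤ) * h i +
      ∑ i ∈ Finset.range (n + 1), (n.choose i : ℤ) * h (i + 1) := by
  rw [Finset.sum_range_succ' (fun i => ((n + 1).choose i : ℤ) * h i) (n + 1)]
  have e1 : ∀ i, (((n + 1).choose (i + 1) : ℕ) : ℤ) = (n.choose i : ℤ) + (n.choose (i + 1) : ℤ) := by
    intro i
    rw [Nat.choose_succ_succ]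
    push_cast
    ring
  simp only [e1, add_mul]
  rw [Finset.sum_add_distrib]
  have e2 : ∑ i ∈ Finset.range (n + 1), (n.choose (i + 1) : ℤ) * h (i + 1)
      + ((n + 1).choose 0 : ℤ) * h 0
      = ∑ i ∈ Finset.range (n + 1), (n.choose i : ℤ) * h i := by
    have : ∑ i ∈ Finset.range (n + 2), (n.choose i : ℤ) * h i
        = ∑ i ∈ Finset.range (n + 1), (n.choose (i + 1) : ℤ) * h (i + 1)
          + (n.choose 0 : ℤ) * h 0 :=
      Finset.sum_range_succ' (fun i => (n.choose i : ℤ) * h i) (n + 1)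
    rw [Finset.sum_range_succ] at this
    simp only [Nat.choose_self, Nat.choose_zero_right, Nat.choose_succ_self,
      Nat.cast_zero, Nat.cast_one, zero_mul, add_zero, one_mul] at this ⊢
    linarith [this]
  linarith [e2]

def gT (i m : ℕ) : ℤ := ∑ j ∈ Finset.range (i + 1), (i.choose j : ℤ) * tribLucas (i + j + m)

def TT (n m : ℕ) : ℤ := ∑ i ∈ Finset.range (n + 1), (n.choose i : ℤ) * gT i m

lemma gT_succ (i m : ℕ) : gT (i + 1) m = gT i (m + 1) + gT i (m + 2) := by
  unfold gT
  have := pascal_sum (fun j => tribLucas (i + 1 + j + m)) i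
  rw [this]
  congr 1
  · apply Finset.sum_congr rfl
    intro j _
    congr 2
    omega
  · apply Finset.sum_congr rfl
    intro j _
    congr 2
    omega

lemma TT_succ (n m : ℕ) : TT (n + 1) m = TT n m + TT n (m + 1) + TT n (m + 2) := by
  unfold TT
  rw [pascal_sum (fun i => gT i m) n]
  simp only [gT_succ, mul_add, Finset.sum_add_distrib]
  ring

lemma TT_eq (n : ℕ) : ∀ m, TT n m = tribLucas (3 * n + m) := by
  induction n with
  | zero =>
    intro m
    simp [TT, gT]
  | succ n ih =>
    intro m
    rw [TT_succ, ih, ih, ih]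
    have : 3 * (n + 1) + m = (3 * n + m) + 3 := by omega
    have e1 : 3 * n + (m + 1) = 3 * n + m + 1 := by omega
    have e2 : 3 * n + (m + 2) = 3 * n + m + 2 := by omega
    rw [this, tribLucas_rec, e1, e2]
    ring

theorem tribLucas_binomial_sum (n : ℕ) :
    tribLucas (3 * n) =
      ∑ i ∈ Finset.range (n + 1), ∑ j ∈ Finset.range (i + 1),
        (n.choose i : ℤ) * (i.choose j : ℤ) * tribLucas (i + j) := by
  have h := TT_eq n 0
  simp only [add_zero] at h
  rw [← h]
  unfold TT gT
  apply Finset.sum_congr rfl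
  intro i _
  rw [Finset.mul_sum]
  apply Finset.sum_congr rfl
  intro j _
  rw [add_zero]
  ring
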